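/- arXiv:2107.08809 — 2 statements merged into one kernel-verified Lean document; each statement's English description precedes it below -/
import Mathlib

section
/- Suppose each f_i is convex (μ = 0) and the GPDMM iterates are generated by the GPDMM update equations for all outer iterations r ≥ 1, with 1/η > L, and let (x*, {λ*_{i|s}}) be a KKT point. For R ≥ 1 define the running average x̄_i^{R} = (1/R)∑_{r=1}^R x̄_i^{r,K}, and let C = ∑_{i=1}^m [ (1/(2ηK))‖x_i^{0,K} − x*‖² + (1/(4ρ))‖ρ(x̄_i^{1,K} − x*) + (λ_{i|s}^{2} − λ*_{i|s})‖² ]. Then for every R ≥ 1: ∑_{i=1}^m [ f_i(x̄_i^{R}) − (λ*_{i|s})ᵀ x̄_i^{R} − f_i(x*) ] ≤ C/R; in particular this quantity is nonnegative and is O(1/R) as R → ∞. -/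
/-!
Each inner step is a gradient step on `fᵢ` that is implicit in the penalty
`⟪λ_{s|i}, ·⟫ + ρ/2 ‖· - x_s‖²`; the usual three-point inequality for such steps, averaged over
the `K` steps by convexity, bounds `fᵢ(x̄ᵢ) - fᵢ(x*) - ⟪λ_{i|s}, x̄ᵢ - x*⟫`. Writing the remaining
cross term `⟪λ_{i|s} - λᵢ*, x̄ᵢ - x*⟫` as a difference of squares
`(‖ρ(x̄ᵢ - x*) + (λ_{i|s} - λᵢ*)‖² - ‖ρ(x̄ᵢ - x*) - (λ_{i|s} - λᵢ*)‖²) / 4ρ`, the dual updates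
turn the minus-terms of round `r` into the plus-terms of round `r + 1`, so the Lagrangian gap of
round `r` is at most `V r - V (r + 1)` for a nonnegative potential `V` with `V 1 = C`.
Telescoping and Jensen's inequality for the running average conclude.
-/

open scoped RealInnerProductSpace

open Finset

section InnerProductSpace

variable {E : Type*} [NormedAddCommGroup E] [InnerProductSpace ℝ E]

lemma inner_sub_sub_eq_add_inner_add_norm_sq (x y p q : E) :
    ⟪y - p, y - q⟫ = ⟪x - p, x - q⟫ + ⟪(x - p) + (x - q), y - x⟫ + ‖y - x‖ ^ 2 := by
  rw [← real_inner_self_eq_norm_sq]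
  simp only [inner_sub_left, inner_sub_right, inner_add_left]
  rw [real_inner_comm q x, real_inner_comm q y, real_inner_comm y x]
  ring

lemma inner_eq_norm_smul_add_sq_sub_norm_smul_sub_sq {ρ : ℝ} (hρ : ρ ≠ 0) (u v : E) :
    ⟪v, u⟫ = 1 / (4 * ρ) * (‖ρ • u + v‖ ^ 2 - ‖ρ • u - v‖ ^ 2) := by
  rw [norm_add_sq_real, norm_sub_sq_real, real_inner_smul_left, real_inner_comm u v]
  field_simp
  ring

lemma sum_norm_two_smul_sub_sq {ι : Type*} [Fintype ι] (u : ι → E) (y : E)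
    (hmean : ∑ i, u i = (Fintype.card ι : ℝ) • y) :
    ∑ i, ‖(2 : ℝ) • y - u i‖ ^ 2 = ∑ i, ‖u i‖ ^ 2 := by
  have hcross : ∑ i, ⟪y, u i⟫ = Fintype.card ι * ‖y‖ ^ 2 := by
    rw [← inner_sum, hmean, real_inner_smul_right, real_inner_self_eq_norm_sq]
  simp only [norm_sub_sq_real, real_inner_smul_left, norm_smul, Real.norm_two, sum_add_distrib,
    sum_sub_distrib, ← mul_sum, hcross, sum_const, card_univ, nsmul_eq_mul]
  ring

lemma card_smul_one_div_card_smul_sum {ι : Type*} [Fintype ι] (v : ι → E) :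
    (Fintype.card ι : ℝ) • ((1 / (Fintype.card ι : ℝ)) • ∑ i, v i) = ∑ i, v i := by
  cases isEmpty_or_nonempty ι
  · simp
  · rw [one_div, smul_inv_smul₀ (by positivity)]

lemma card_mul_le_sum_of_subgradient {ι : Type*} (s : Finset ι) (φ : E → ℝ) (x : ι → E)
    (xb g : E) (hxb : ∑ k ∈ s, x k = (#s : ℝ) • xb)
    (hg : ∀ k ∈ s, φ xb + ⟪g, x k - xb⟫ ≤ φ (x k)) :
    #s * φ xb ≤ ∑ k ∈ s, φ (x k) := by
  have hlin : ∑ k ∈ s, ⟪g, x k - xb⟫ = 0 := by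
    rw [← inner_sum, sum_sub_distrib, hxb, sum_const, ← Nat.cast_smul_eq_nsmul ℝ, sub_self,
      inner_zero_right]
  calc #s * φ xb = ∑ k ∈ s, (φ xb + ⟪g, x k - xb⟫) := by
        rw [sum_add_distrib, hlin, sum_const, nsmul_eq_mul, add_zero]
    _ ≤ ∑ k ∈ s, φ (x k) := sum_le_sum hg

lemma gradient_step_three_point {f : E → ℝ} {L η : ℝ} {a b z g v : E}
    (hconvex : f a + ⟪g, z - a⟫ ≤ f z)
    (hdescent : f b ≤ f a + ⟪g, b - a⟫ + L / 2 * ‖a - b‖ ^ 2) (hηL : L ≤ 1 / η)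
    (hstep : (1 / η) • (a - b) = g + v) :
    f b + ⟪v, b - z⟫ ≤ f z + 1 / (2 * η) * (‖a - z‖ ^ 2 - ‖b - z‖ ^ 2) := by
  have hg : ⟪g, b - a⟫ - ⟪g, z - a⟫ = 1 / η * ⟪a - b, b - z⟫ - ⟪v, b - z⟫ := by
    rw [← inner_sub_right, sub_sub_sub_cancel_right, eq_sub_of_add_eq hstep.symm,
      inner_sub_left, real_inner_smul_left]
  have hpyth : ‖a - z‖ ^ 2 = ‖a - b‖ ^ 2 + 2 * ⟪a - b, b - z⟫ + ‖b - z‖ ^ 2 := by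
    rw [← norm_add_sq_real, sub_add_sub_cancel]
  have hL : L / 2 * ‖a - b‖ ^ 2 ≤ 1 / η / 2 * ‖a - b‖ ^ 2 := by gcongr
  rw [hpyth, show 1 / (2 * η) = 1 / η / 2 by ring]
  linarith

lemma gradient_steps_average_bound {f : E → ℝ} {f' : E → E} {L η ρ : ℝ} {K : ℕ}
    (hconvex : ∀ x y, f x + ⟪f' x, y - x⟫ ≤ f y)
    (hdescent : ∀ x y, f y ≤ f x + ⟪f' x, y - x⟫ + L / 2 * ‖x - y‖ ^ 2)
    (hηL : L ≤ 1 / η) (hρ : 0 ≤ ρ) {x : ℕ → E} {c lam xb : E} (z : E)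
    (hstep : ∀ k < K, (1 / η) • (x k - x (k + 1)) = f' (x k) + (lam + ρ • (x (k + 1) - c)))
    (hxb : ∑ k ∈ range K, x (k + 1) = (K : ℝ) • xb) :
    K * (f xb - f z + ⟪lam + ρ • (xb - c), xb - z⟫)
      ≤ 1 / (2 * η) * (‖x 0 - z‖ ^ 2 - ‖x K - z‖ ^ 2) := by
  set φ : E → ℝ := fun y ↦ f y + ⟪lam + ρ • (y - c), y - z⟫ with hφ
  have hsub : ∀ y, φ xb + ⟪f' xb + lam + ρ • ((xb - c) + (xb - z)), y - xb⟫ ≤ φ y := by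
    intro y
    have hquad := inner_sub_sub_eq_add_inner_add_norm_sq xb y c z
    have hlin : ⟪lam, y - z⟫ = ⟪lam, xb - z⟫ + ⟪lam, y - xb⟫ := by
      rw [← inner_add_right, sub_add_sub_cancel']
    simp only [hφ, inner_add_left, real_inner_smul_left, hquad, hlin]
    nlinarith [hconvex xb y, sq_nonneg ‖y - xb‖]
  have hsteps : ∑ k ∈ range K, φ (x (k + 1))
      ≤ ∑ k ∈ range K, (f z + 1 / (2 * η) * (‖x k - z‖ ^ 2 - ‖x (k + 1) - z‖ ^ 2)) :=
    sum_le_sum fun k hk ↦ gradient_step_three_point (hconvex _ _) (hdescent _ _) hηL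
      (hstep k (mem_range.mp hk))
  have htel : ∑ k ∈ range K, (f z + 1 / (2 * η) * (‖x k - z‖ ^ 2 - ‖x (k + 1) - z‖ ^ 2))
      = K * f z + 1 / (2 * η) * (‖x 0 - z‖ ^ 2 - ‖x K - z‖ ^ 2) := by
    rw [sum_add_distrib, ← mul_sum, sum_range_sub' fun k ↦ ‖x k - z‖ ^ 2, sum_const,
      card_range, nsmul_eq_mul]
  have hjensen : K * φ xb ≤ ∑ k ∈ range K, φ (x (k + 1)) := by
    simpa using card_mul_le_sum_of_subgradient (range K) φ (fun k ↦ x (k + 1)) xb _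
      (by simpa using hxb) fun k _ ↦ hsub (x (k + 1))
  simp only [hφ] at hjensen
  linarith

end InnerProductSpace

lemma sum_Icc_le_of_le_sub_succ {S V : ℕ → ℝ} (R : ℕ) (hS : ∀ r ≥ 1, S r ≤ V r - V (r + 1))
    (hV : 0 ≤ V (R + 1)) : ∑ r ∈ Icc 1 R, S r ≤ V 1 := by
  have htel : ∑ r ∈ Ico 1 (R + 1), (V (r + 1) - V r) = V (R + 1) - V 1 :=
    sum_Ico_sub V (by omega)
  calc ∑ r ∈ Icc 1 R, S r ≤ ∑ r ∈ Icc 1 R, (V r - V (r + 1)) :=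
        sum_le_sum fun r hr ↦ hS r (mem_Icc.mp hr).1
    _ = V 1 - V (R + 1) := by
        rw [← Ico_add_one_right_eq_Icc, ← neg_sub, ← htel, ← sum_neg_distrib]
        simp only [neg_sub]
    _ ≤ V 1 := by linarith

section GPDMM

variable {ι E : Type*} [Fintype ι] [NormedAddCommGroup E] [InnerProductSpace ℝ E]

structure IsGPDMMRun (f' : ι → E → E) (η ρ : ℝ) (K : ℕ) (xi : ι → ℕ → ℕ → E)
    (xbar lamis lamsi : ι → ℕ → E) (xs : ℕ → E) : Prop where
  init : ∀ i, ∀ r ≥ 1, xi i r 0 = xi i (r - 1) K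
  inner_step : ∀ i, ∀ r ≥ 1, ∀ k < K, xi i r (k + 1) =
    xi i r k - (1 / (1 / η + ρ)) • (f' i (xi i r k) + ρ • (xi i r k - xs r) + lamsi i r)
  xbar_eq : ∀ i, ∀ r ≥ 1, xbar i r = (1 / (K : ℝ)) • ∑ k ∈ range K, xi i r (k + 1)
  lamis_succ : ∀ i, ∀ r ≥ 1, lamis i (r + 1) = ρ • (xs r - xbar i r) - lamsi i r
  xs_succ : ∀ r ≥ 1,
    xs (r + 1) = (1 / (Fintype.card ι : ℝ)) • ∑ i, (xbar i r - (1 / ρ) • lamis i (r + 1))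
  lamsi_succ : ∀ i, ∀ r ≥ 1, lamsi i (r + 1) = ρ • (xbar i r - xs (r + 1)) - lamis i (r + 1)

structure IsKKTPoint (f' : ι → E → E) (xstar : E) (lamstar : ι → E) : Prop where
  grad_eq : ∀ i, f' i xstar = lamstar i
  sum_eq_zero : ∑ i, lamstar i = 0

def lagrangianGap (f : ι → E → ℝ) (lamstar : ι → E) (xstar : E) (x : ι → E) : ℝ :=
  ∑ i, (f i (x i) - ⟪lamstar i, x i⟫ - f i xstar)

noncomputable def gpdmmPotential (η ρ : ℝ) (K : ℕ) (xi : ι → ℕ → ℕ → E)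
    (xbar lamis : ι → ℕ → E) (xstar : E) (lamstar : ι → E) (r : ℕ) : ℝ :=
  ∑ i, (1 / (2 * η * K) * ‖xi i r 0 - xstar‖ ^ 2
    + 1 / (4 * ρ) * ‖ρ • (xbar i r - xstar) + (lamis i (r + 1) - lamstar i)‖ ^ 2)

variable {f : ι → E → ℝ} {f' : ι → E → E} {η ρ L : ℝ} {K : ℕ} {xi : ι → ℕ → ℕ → E}
  {xbar lamis lamsi : ι → ℕ → E} {xs : ℕ → E} {xstar : E} {lamstar : ι → E}

lemma lagrangianGap_nonneg (hconvex : ∀ i y, f i xstar + ⟪f' i xstar, y - xstar⟫ ≤ f i y)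
    (hkkt : IsKKTPoint f' xstar lamstar) (x : ι → E) :
    0 ≤ lagrangianGap f lamstar xstar x := by
  have hzero : ∑ i, ⟪lamstar i, xstar⟫ = 0 := by
    rw [← sum_inner, hkkt.sum_eq_zero, inner_zero_left]
  have hterm : ∀ i, -⟪lamstar i, xstar⟫ ≤ f i (x i) - ⟪lamstar i, x i⟫ - f i xstar := by
    intro i
    have := hconvex i (x i)
    rw [hkkt.grad_eq i, inner_sub_right] at this
    linarith
  calc (0 : ℝ) = ∑ i, -⟪lamstar i, xstar⟫ := by rw [sum_neg_distrib, hzero, neg_zero]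
    _ ≤ lagrangianGap f lamstar xstar x := sum_le_sum fun i _ ↦ hterm i

lemma card_mul_lagrangianGap_average_le (hconvex : ∀ i x y, f i x + ⟪f' i x, y - x⟫ ≤ f i y)
    {s : Finset ℕ} (hs : s.Nonempty) (x : ι → ℕ → E) :
    #s * lagrangianGap f lamstar xstar (fun i ↦ (1 / (#s : ℝ)) • ∑ r ∈ s, x i r)
      ≤ ∑ r ∈ s, lagrangianGap f lamstar xstar (fun i ↦ x i r) := by
  have hs0 : (#s : ℝ) ≠ 0 := by exact_mod_cast hs.card_pos.ne'
  simp only [lagrangianGap]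
  rw [mul_sum, sum_comm]
  refine sum_le_sum fun i _ ↦ ?_
  set xb := (1 / (#s : ℝ)) • ∑ r ∈ s, x i r with hxb
  exact card_mul_le_sum_of_subgradient s (fun y ↦ f i y - ⟪lamstar i, y⟫ - f i xstar) (x i) xb
    (f' i xb - lamstar i) (by rw [hxb, one_div, smul_inv_smul₀ hs0]) fun r _ ↦ by
      have := hconvex i xb (x i r)
      simp only [inner_sub_left, inner_sub_right] at this ⊢
      linarith

lemma IsGPDMMRun.local_bound (hrun : IsGPDMMRun f' η ρ K xi xbar lamis lamsi xs)
    (hK : 1 ≤ K) (hη : 0 < η) (hρ : 0 < ρ) (hηL : L ≤ 1 / η)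
    (hconvex : ∀ i x y, f i x + ⟪f' i x, y - x⟫ ≤ f i y)
    (hdescent : ∀ i x y, f i y ≤ f i x + ⟪f' i x, y - x⟫ + L / 2 * ‖x - y‖ ^ 2)
    (i : ι) {r : ℕ} (hr : 1 ≤ r) (z : E) :
    f i (xbar i r) - f i z - ⟪lamis i (r + 1), xbar i r - z⟫
      ≤ 1 / (2 * η * K) * (‖xi i r 0 - z‖ ^ 2 - ‖xi i r K - z‖ ^ 2) := by
  have hK0 : (0 : ℝ) < K := by exact_mod_cast hK
  have hstep : ∀ k < K, (1 / η) • (xi i r k - xi i r (k + 1))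
      = f' i (xi i r k) + (lamsi i r + ρ • (xi i r (k + 1) - xs r)) := by
    intro k hk
    have hfull : (1 / η + ρ) • (xi i r k - xi i r (k + 1))
        = f' i (xi i r k) + ρ • (xi i r k - xs r) + lamsi i r := by
      rw [hrun.inner_step i r hr k hk, sub_sub_cancel, smul_smul,
        mul_one_div_cancel (by positivity), one_smul]
    calc (1 / η) • (xi i r k - xi i r (k + 1))
        = (1 / η + ρ) • (xi i r k - xi i r (k + 1)) - ρ • (xi i r k - xi i r (k + 1)) := by
          module
      _ = _ := by rw [hfull]; module
  have hxbar : ∑ k ∈ range K, xi i r (k + 1) = (K : ℝ) • xbar i r := by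
    rw [hrun.xbar_eq i r hr, one_div, smul_inv_smul₀ hK0.ne']
  have hdual : lamsi i r + ρ • (xbar i r - xs r) = -lamis i (r + 1) := by
    rw [hrun.lamis_succ i r hr]; module
  have hbound := gradient_steps_average_bound (hconvex i) (hdescent i) hηL hρ.le z hstep hxbar
  rw [hdual, inner_neg_left] at hbound
  rw [show 1 / (2 * η * K) = 1 / (2 * η) / K by field_simp, div_mul_eq_mul_div, le_div_iff₀ hK0]
  linarith

/-- The dual update reflects the vectors `ρ (x̄ᵢ - x*) - (λ_{i|s} - λᵢ*)` of round `r` through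
their mean `ρ (x_s - x*)`, giving the vectors `ρ (x̄ᵢ - x*) + (λ_{i|s} - λᵢ*)` of round `r + 1`. -/
lemma IsGPDMMRun.sum_norm_sq_succ (hrun : IsGPDMMRun f' η ρ K xi xbar lamis lamsi xs)
    (hρ : 0 < ρ) (hsum : ∑ i, lamstar i = 0) {r : ℕ} (hr : 1 ≤ r) :
    ∑ i, ‖ρ • (xbar i (r + 1) - xstar) + (lamis i (r + 1 + 1) - lamstar i)‖ ^ 2
      = ∑ i, ‖ρ • (xbar i r - xstar) - (lamis i (r + 1) - lamstar i)‖ ^ 2 := by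
  set u : ι → E := fun i ↦ ρ • (xbar i r - xstar) - (lamis i (r + 1) - lamstar i)
  set y : E := ρ • (xs (r + 1) - xstar)
  have hreflect : ∀ i, ρ • (xbar i (r + 1) - xstar) + (lamis i (r + 1 + 1) - lamstar i)
      = (2 : ℝ) • y - u i := by
    intro i
    rw [hrun.lamis_succ i (r + 1) (by omega), hrun.lamsi_succ i r hr]
    module
  have hu : ∀ i, u i = ρ • (xbar i r - (1 / ρ) • lamis i (r + 1)) - ρ • xstar + lamstar i := by
    intro i
    rw [smul_sub ρ _ ((1 / ρ) • _), smul_smul, mul_one_div_cancel hρ.ne', one_smul]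
    module
  have hmean : ∑ i, u i = (Fintype.card ι : ℝ) • y := by
    rw [sum_congr rfl fun i _ ↦ hu i, sum_add_distrib, sum_sub_distrib, ← smul_sum, hsum,
      sum_const, card_univ, ← card_smul_one_div_card_smul_sum, ← hrun.xs_succ r hr,
      ← Nat.cast_smul_eq_nsmul ℝ]
    module
  simp only [hreflect]
  exact sum_norm_two_smul_sub_sq u y hmean

lemma IsGPDMMRun.lagrangianGap_le_potential_sub
    (hrun : IsGPDMMRun f' η ρ K xi xbar lamis lamsi xs)
    (hK : 1 ≤ K) (hη : 0 < η) (hρ : 0 < ρ) (hηL : L ≤ 1 / η)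
    (hconvex : ∀ i x y, f i x + ⟪f' i x, y - x⟫ ≤ f i y)
    (hdescent : ∀ i x y, f i y ≤ f i x + ⟪f' i x, y - x⟫ + L / 2 * ‖x - y‖ ^ 2)
    (hsum : ∑ i, lamstar i = 0) {r : ℕ} (hr : 1 ≤ r) :
    lagrangianGap f lamstar xstar (fun i ↦ xbar i r)
      ≤ gpdmmPotential η ρ K xi xbar lamis xstar lamstar r
        - gpdmmPotential η ρ K xi xbar lamis xstar lamstar (r + 1) := by
  have hterm : ∀ i, f i (xbar i r) - ⟪lamstar i, xbar i r⟫ - f i xstar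
      ≤ 1 / (2 * η * K) * (‖xi i r 0 - xstar‖ ^ 2 - ‖xi i r K - xstar‖ ^ 2)
        + 1 / (4 * ρ) * (‖ρ • (xbar i r - xstar) + (lamis i (r + 1) - lamstar i)‖ ^ 2
          - ‖ρ • (xbar i r - xstar) - (lamis i (r + 1) - lamstar i)‖ ^ 2)
        - ⟪lamstar i, xstar⟫ := by
    intro i
    have hlocal := hrun.local_bound hK hη hρ hηL hconvex hdescent i hr xstar
    rw [← inner_eq_norm_smul_add_sq_sub_norm_smul_sub_sq hρ.ne']
    simp only [inner_sub_left, inner_sub_right] at hlocal ⊢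
    linarith
  have hzero : ∑ i, ⟪lamstar i, xstar⟫ = 0 := by rw [← sum_inner, hsum, inner_zero_left]
  have hinit : ∀ i, xi i (r + 1) 0 = xi i r K := fun i ↦ hrun.init i (r + 1) (by omega)
  calc lagrangianGap f lamstar xstar (fun i ↦ xbar i r)
      ≤ ∑ i, (1 / (2 * η * K) * (‖xi i r 0 - xstar‖ ^ 2 - ‖xi i r K - xstar‖ ^ 2)
        + 1 / (4 * ρ) * (‖ρ • (xbar i r - xstar) + (lamis i (r + 1) - lamstar i)‖ ^ 2
          - ‖ρ • (xbar i r - xstar) - (lamis i (r + 1) - lamstar i)‖ ^ 2)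
        - ⟪lamstar i, xstar⟫) := sum_le_sum fun i _ ↦ hterm i
    _ = _ := by
      simp only [gpdmmPotential, hinit, sum_sub_distrib, sum_add_distrib, ← mul_sum, hzero,
        hrun.sum_norm_sq_succ hρ hsum hr]
      ring

end GPDMM

theorem gpdmm_sublinear_primal_general {d m K : ℕ} (hK : 1 ≤ K)
    (f : Fin m → EuclideanSpace ℝ (Fin d) → ℝ)
    (f' : Fin m → EuclideanSpace ℝ (Fin d) → EuclideanSpace ℝ (Fin d))
    (L : ℝ)
    (hconvex : ∀ i x y, f i y ≥ f i x + ⟪f' i x, y - x⟫)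
    (hdescent : ∀ i x y, f i y ≤ f i x + ⟪f' i x, y - x⟫ + L / 2 * ‖x - y‖ ^ 2)
    (η ρ : ℝ) (hη : 0 < η) (hηL : L < 1 / η) (hρ : 0 < ρ)
    -- GPDMM iterates
    (xi : Fin m → ℕ → ℕ → EuclideanSpace ℝ (Fin d))
    (xbar : Fin m → ℕ → EuclideanSpace ℝ (Fin d))
    (lamis lamsi : Fin m → ℕ → EuclideanSpace ℝ (Fin d))
    (xs : ℕ → EuclideanSpace ℝ (Fin d))
    (hinit : ∀ i, ∀ r ≥ 1, xi i r 0 = xi i (r - 1) K)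
    (hinner : ∀ i, ∀ r ≥ 1, ∀ k < K, xi i r (k + 1) =
      xi i r k - (1 / (1 / η + ρ)) • (f' i (xi i r k) + ρ • (xi i r k - xs r) + lamsi i r))
    (hxbar : ∀ i, ∀ r ≥ 1, xbar i r = (1 / (K : ℝ)) • ∑ k ∈ Finset.range K, xi i r (k + 1))
    (hlamis : ∀ i, ∀ r ≥ 1, lamis i (r + 1) = ρ • (xs r - xbar i r) - lamsi i r)
    (hxs : ∀ r ≥ 1, xs (r + 1) = (1 / (m : ℝ)) • ∑ i, (xbar i r - (1 / ρ) • lamis i (r + 1)))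
    (hlamsi : ∀ i, ∀ r ≥ 1, lamsi i (r + 1) = ρ • (xbar i r - xs (r + 1)) - lamis i (r + 1))
    -- KKT point
    (xstar : EuclideanSpace ℝ (Fin d)) (lamstar : Fin m → EuclideanSpace ℝ (Fin d))
    (hKKTgrad : ∀ i, f' i xstar = lamstar i)
    (hKKTsum : ∑ i, lamstar i = 0)
    -- the constant C
    (C : ℝ)
    (hC : C = ∑ i, (1 / (2 * η * (K : ℝ)) * ‖xi i 0 K - xstar‖ ^ 2
      + 1 / (4 * ρ) * ‖ρ • (xbar i 1 - xstar) + (lamis i 2 - lamstar i)‖ ^ 2)) :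
    ∀ R : ℕ, 1 ≤ R →
      0 ≤ ∑ i, (f i ((1 / (R : ℝ)) • ∑ r ∈ Finset.Icc 1 R, xbar i r)
            - ⟪lamstar i, (1 / (R : ℝ)) • ∑ r ∈ Finset.Icc 1 R, xbar i r⟫
            - f i xstar) ∧
      ∑ i, (f i ((1 / (R : ℝ)) • ∑ r ∈ Finset.Icc 1 R, xbar i r)
            - ⟪lamstar i, (1 / (R : ℝ)) • ∑ r ∈ Finset.Icc 1 R, xbar i r⟫
            - f i xstar) ≤ C / (R : ℝ) := by
  intro R hR
  have hrun : IsGPDMMRun f' η ρ K xi xbar lamis lamsi xs :=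
    ⟨hinit, hinner, hxbar, hlamis, by simpa using hxs, hlamsi⟩
  have hkkt : IsKKTPoint f' xstar lamstar := ⟨hKKTgrad, hKKTsum⟩
  have hdecrease : ∀ r ≥ 1, lagrangianGap f lamstar xstar (fun i ↦ xbar i r)
      ≤ gpdmmPotential η ρ K xi xbar lamis xstar lamstar r
        - gpdmmPotential η ρ K xi xbar lamis xstar lamstar (r + 1) := fun r hr ↦
    hrun.lagrangianGap_le_potential_sub hK hη hρ hηL.le hconvex hdescent hKKTsum hr
  have hpotential_one : gpdmmPotential η ρ K xi xbar lamis xstar lamstar 1 = C := by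
    simp only [hC, gpdmmPotential, hinit _ 1 le_rfl, Nat.sub_self]
  have htelescope := sum_Icc_le_of_le_sub_succ R hdecrease (by unfold gpdmmPotential; positivity)
  have haverage := card_mul_lagrangianGap_average_le (f := f) (lamstar := lamstar)
    (xstar := xstar) hconvex (nonempty_Icc.mpr hR) xbar
  rw [Nat.card_Icc, Nat.add_sub_cancel] at haverage
  refine ⟨lagrangianGap_nonneg (fun i ↦ hconvex i xstar) hkkt _, ?_⟩
  rw [le_div_iff₀ (by positivity), mul_comm]
  exact haverage.trans (htelescope.trans hpotential_one.le)

/-- First claim of Theorem 2 of the paper: sublinear O(1/R) convergence of the GPDMM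
primal running averages for general convex clients (μ = 0). -/
theorem gpdmm_sublinear_primal {d m K : ℕ} (hm : 0 < m) (hK : 1 ≤ K)
    (f : Fin m → EuclideanSpace ℝ (Fin d) → ℝ)
    (f' : Fin m → EuclideanSpace ℝ (Fin d) → EuclideanSpace ℝ (Fin d))
    (L : ℝ) (hL : 0 < L)
    (hdiff : ∀ i x, HasGradientAt (f i) (f' i x) x)
    (hconvex : ∀ i x y, f i y ≥ f i x + ⟪f' i x, y - x⟫)
    (hdescent : ∀ i x y, f i y ≤ f i x + ⟪f' i x, y - x⟫ + L / 2 * ‖x - y‖ ^ 2)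
    (hcoco : ∀ i x y, f i y ≥ f i x + ⟪f' i x, y - x⟫ + 1 / (2 * L) * ‖f' i x - f' i y‖ ^ 2)
    (η ρ : ℝ) (hη : 0 < η) (hηL : L < 1 / η) (hρ : 0 < ρ)
    -- GPDMM iterates
    (xi : Fin m → ℕ → ℕ → EuclideanSpace ℝ (Fin d))
    (xbar : Fin m → ℕ → EuclideanSpace ℝ (Fin d))
    (lamis lamsi : Fin m → ℕ → EuclideanSpace ℝ (Fin d))
    (xs : ℕ → EuclideanSpace ℝ (Fin d))
    (hinit : ∀ i, ∀ r ≥ 1, xi i r 0 = xi i (r - 1) K)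
    (hinner : ∀ i, ∀ r ≥ 1, ∀ k < K, xi i r (k + 1) =
      xi i r k - (1 / (1 / η + ρ)) • (f' i (xi i r k) + ρ • (xi i r k - xs r) + lamsi i r))
    (hxbar : ∀ i, ∀ r ≥ 1, xbar i r = (1 / (K : ℝ)) • ∑ k ∈ Finset.range K, xi i r (k + 1))
    (hlamis : ∀ i, ∀ r ≥ 1, lamis i (r + 1) = ρ • (xs r - xbar i r) - lamsi i r)
    (hxs : ∀ r ≥ 1, xs (r + 1) = (1 / (m : ℝ)) • ∑ i, (xbar i r - (1 / ρ) • lamis i (r + 1)))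
    (hlamsi : ∀ i, ∀ r ≥ 1, lamsi i (r + 1) = ρ • (xbar i r - xs (r + 1)) - lamis i (r + 1))
    -- KKT point
    (xstar : EuclideanSpace ℝ (Fin d)) (lamstar : Fin m → EuclideanSpace ℝ (Fin d))
    (hKKTgrad : ∀ i, f' i xstar = lamstar i)
    (hKKTsum : ∑ i, lamstar i = 0)
    -- the constant C
    (C : ℝ)
    (hC : C = ∑ i, (1 / (2 * η * (K : ℝ)) * ‖xi i 0 K - xstar‖ ^ 2
      + 1 / (4 * ρ) * ‖ρ • (xbar i 1 - xstar) + (lamis i 2 - lamstar i)‖ ^ 2)) :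
    ∀ R : ℕ, 1 ≤ R →
      0 ≤ ∑ i, (f i ((1 / (R : ℝ)) • ∑ r ∈ Finset.Icc 1 R, xbar i r)
            - ⟪lamstar i, (1 / (R : ℝ)) • ∑ r ∈ Finset.Icc 1 R, xbar i r⟫
            - f i xstar) ∧
      ∑ i, (f i ((1 / (R : ℝ)) • ∑ r ∈ Finset.Icc 1 R, xbar i r)
            - ⟪lamstar i, (1 / (R : ℝ)) • ∑ r ∈ Finset.Icc 1 R, xbar i r⟫
            - f i xstar) ≤ C / (R : ℝ) :=
  gpdmm_sublinear_primal_general hK f f' L hconvex hdescent η ρ hη hηL hρ xi xbar lamis lamsi xs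
    hinit hinner hxbar hlamis hxs hlamsi xstar lamstar hKKTgrad hKKTsum C hC
end

section
/- Suppose that, at outer iteration r, the GPDMM client iterates x_i^{r,k} (k = 0,…,K) and x̄_i^{r,K} = (1/K)∑_{k=1}^K x_i^{r,k} are generated by the GPDMM inner update x_i^{r,k+1} = x_i^{r,k} − (1/(1/η + ρ))·[∇f_i(x_i^{r,k}) + ρ(x_i^{r,k} − x_s^r) + λ_{s|i}^r] with 1/η ≥ L, and set λ_{i|s}^{r+1} = ρ(x_s^r − x̄_i^{r,K}) − λ_{s|i}^r. Let x* ∈ ℝ^d and λ*_{i|s} = ∇f_i(x*) for each i. Then for every θ ∈ [0,1]: ∑_{i=1}^m (1/K)∑_{k=0}^{K−1} ((1/η − θμ)/2)‖x_i^{r,k} − x*‖² ≥ ∑_{i=1}^m [ f_i(x̄_i^{r,K}) − f_i(x*) − (x̄_i^{r,K} − x*)ᵀλ_{i|s}^{r+1} + (1/K)∑_{k=0}^{K−1} ( (1/(2η))‖x* − x_i^{r,k+1}‖² + ((1/η − L)/2)‖x_i^{r,k+1} − x_i^{r,k}‖² + ((1−θ)/(2L))‖ρ(x_s^r − x_i^{r,k+1})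 − λ_{s|i}^r − λ*_{i|s} − (1/η)(x_i^{r,k+1} − x_i^{r,k})‖² ) ]. -/
open scoped RealInnerProductSpace
open Finset

/-!
Solving the inner update for the gradient gives
`∇f_i(x^k) = ρ (x_s - x^{k+1}) - λ_{s|i} - (1/η)(x^{k+1} - x^k)`. Substituting this into the
descent lemma between `x^k` and `x^{k+1}` and into a `θ`-convex combination of strong convexity
and cocoercivity between `x^k` and `x*`, the three-point identity for
`⟪x^{k+1} - x^k, x^{k+1} - x*⟫` yields a bound for a single inner step. Averaging over `k`,
Jensen's inequality bounds `f_i(x̄)` by the mean of the `f_i(x^{k+1})`, and, since the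
deviations `x^{k+1} - x̄` sum to zero, the mean of the dual terms
`⟪λ_{i|s} - ρ (x^{k+1} - x̄), x^{k+1} - x*⟫` is `⟪λ_{i|s}, x̄ - x*⟫` minus the nonnegative
`ρ · mean ‖x^{k+1} - x̄‖²`.
-/

section InnerProductSpace

variable {F : Type*} [NormedAddCommGroup F] [InnerProductSpace ℝ F]

theorem two_mul_real_inner_sub_sub (a b c : F) :
    2 * ⟪a - b, a - c⟫ = ‖a - b‖ ^ 2 + ‖a - c‖ ^ 2 - ‖b - c‖ ^ 2 := by
  have h := norm_sub_sq_real (a - c) (a - b)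
  rw [show a - c - (a - b) = b - c by abel, real_inner_comm] at h
  linarith

variable {ι : Type*} {s : Finset ι} {v : ι → F} {xbar : F}

theorem sum_sub_eq_zero_of_sum_eq_card_smul (hmean : ∑ k ∈ s, v k = (#s : ℝ) • xbar) :
    ∑ k ∈ s, (v k - xbar) = 0 := by
  rw [sum_sub_distrib, hmean, sum_const, Nat.cast_smul_eq_nsmul, sub_self]

theorem card_mul_le_sum_of_subgradient_s14 {f : F → ℝ} {g : F}
    (hsub : ∀ y, f xbar + ⟪g, y - xbar⟫ ≤ f y) (hmean : ∑ k ∈ s, v k = (#s : ℝ) • xbar) :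
    #s * f xbar ≤ ∑ k ∈ s, f (v k) :=
  calc (#s : ℝ) * f xbar = ∑ k ∈ s, (f xbar + ⟪g, v k - xbar⟫) := by
        rw [sum_add_distrib, ← inner_sum, sum_sub_eq_zero_of_sum_eq_card_smul hmean,
          inner_zero_right, add_zero, sum_const, nsmul_eq_mul]
    _ ≤ ∑ k ∈ s, f (v k) := sum_le_sum fun k _ => hsub (v k)

theorem sum_inner_sub_smul_sub_mean_le {ρ : ℝ} (hρ : 0 ≤ ρ) (c z : F)
    (hmean : ∑ k ∈ s, v k = (#s : ℝ) • xbar) :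
    ∑ k ∈ s, ⟪c - ρ • (v k - xbar), v k - z⟫ ≤ #s * ⟪c, xbar - z⟫ := by
  have hvar : ∑ k ∈ s, ⟪v k - xbar, v k - z⟫ = ∑ k ∈ s, ‖v k - xbar‖ ^ 2 := by
    simp_rw [show ∀ k, v k - z = (v k - xbar) + (xbar - z) by intro; abel, inner_add_right,
      real_inner_self_eq_norm_sq]
    rw [sum_add_distrib, ← sum_inner, sum_sub_eq_zero_of_sum_eq_card_smul hmean,
      inner_zero_left, add_zero]
  have hlin : ∑ k ∈ s, ⟪c, v k - z⟫ = #s * ⟪c, xbar - z⟫ := by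
    rw [← inner_sum, sum_sub_distrib, hmean, sum_const, ← Nat.cast_smul_eq_nsmul ℝ, ← smul_sub,
      real_inner_smul_right]
  calc ∑ k ∈ s, ⟪c - ρ • (v k - xbar), v k - z⟫
      = #s * ⟪c, xbar - z⟫ - ρ * ∑ k ∈ s, ‖v k - xbar‖ ^ 2 := by
        simp only [inner_sub_left c, real_inner_smul_left, sum_sub_distrib, ← mul_sum, hvar, hlin]
    _ ≤ #s * ⟪c, xbar - z⟫ :=
        sub_le_self _ (mul_nonneg hρ (sum_nonneg fun _ _ => sq_nonneg _))

end InnerProductSpace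

namespace GPDMM

theorem grad_eq_of_update {E : Type*} [AddCommGroup E] [Module ℝ E] {η ρ : ℝ}
    (hc : 1 / η + ρ ≠ 0) {g x x' xs lam : E}
    (h : x' = x - (1 / (1 / η + ρ)) • (g + ρ • (x - xs) + lam)) :
    g = ρ • (xs - x') - lam - (1 / η) • (x' - x) := by
  subst h
  match_scalars <;> field_simp <;> ring

variable {F : Type*} [NormedAddCommGroup F] [InnerProductSpace ℝ F]

theorem inner_step_bound {f : F → ℝ} {L μ η ρ θ : ℝ} (hθ0 : 0 ≤ θ) (hθ1 : θ ≤ 1)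
    {g lamstar x x' xs xstar lam : F}
    (hg : g = ρ • (xs - x') - lam - (1 / η) • (x' - x))
    (hdescent : f x' ≤ f x + ⟪g, x' - x⟫ + L / 2 * ‖x - x'‖ ^ 2)
    (hstrong : f xstar ≥ f x + ⟪g, xstar - x⟫ + μ / 2 * ‖x - xstar‖ ^ 2)
    (hcoco : f xstar ≥ f x + ⟪g, xstar - x⟫ + 1 / (2 * L) * ‖g - lamstar‖ ^ 2) :
    f x' - f xstar - ⟪ρ • (xs - x') - lam, x' - xstar⟫
      + (1 / (2 * η) * ‖xstar - x'‖ ^ 2 + (1 / η - L) / 2 * ‖x' - x‖ ^ 2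
        + (1 - θ) / (2 * L) * ‖ρ • (xs - x') - lam - lamstar - (1 / η) • (x' - x)‖ ^ 2)
    ≤ (1 / η - θ * μ) / 2 * ‖x - xstar‖ ^ 2 := by
  have hgap : ρ • (xs - x') - lam - lamstar - (1 / η) • (x' - x) = g - lamstar := by
    rw [hg]; abel
  have hinner : ⟪g, x' - x⟫ - ⟪g, xstar - x⟫
      = ⟪ρ • (xs - x') - lam, x' - xstar⟫ - 1 / η * ⟪x' - x, x' - xstar⟫ := by
    rw [← inner_sub_right, sub_sub_sub_cancel_right, hg, inner_sub_left, real_inner_smul_left]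
  have hθstrong := mul_le_mul_of_nonneg_left hstrong.le hθ0
  have hθcoco := mul_le_mul_of_nonneg_left hcoco.le (sub_nonneg.2 hθ1)
  rw [hgap, norm_sub_rev xstar]
  rw [norm_sub_rev x x'] at hdescent
  linear_combination hdescent + hθstrong + hθcoco + hinner
    - 1 / η / 2 * two_mul_real_inner_sub_sub x' x xstar

theorem inner_steps_average_bound {f : F → ℝ} {f' : F → F} {L μ η ρ θ : ℝ} {K : ℕ} (hK : 1 ≤ K)
    (hμ : 0 ≤ μ) (hη : 0 < η) (hρ : 0 ≤ ρ) (hθ0 : 0 ≤ θ) (hθ1 : θ ≤ 1)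
    (hdescent : ∀ x y, f y ≤ f x + ⟪f' x, y - x⟫ + L / 2 * ‖x - y‖ ^ 2)
    (hcoco : ∀ x y, f y ≥ f x + ⟪f' x, y - x⟫ + 1 / (2 * L) * ‖f' x - f' y‖ ^ 2)
    (hstrong : ∀ x y, f y ≥ f x + ⟪f' x, y - x⟫ + μ / 2 * ‖x - y‖ ^ 2)
    {xs xbar lam lam' xstar : F} {x : ℕ → F}
    (hupdate : ∀ k < K, x (k + 1) =
      x k - (1 / (1 / η + ρ)) • (f' (x k) + ρ • (x k - xs) + lam))
    (hxbar : xbar = (1 / (K : ℝ)) • ∑ k ∈ range K, x (k + 1))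
    (hlam' : lam' = ρ • (xs - xbar) - lam) :
    f xbar - f xstar - ⟪xbar - xstar, lam'⟫
        + (1 / (K : ℝ)) * ∑ k ∈ range K,
            (1 / (2 * η) * ‖xstar - x (k + 1)‖ ^ 2 + (1 / η - L) / 2 * ‖x (k + 1) - x k‖ ^ 2
              + (1 - θ) / (2 * L) *
                  ‖ρ • (xs - x (k + 1)) - lam - f' xstar - (1 / η) • (x (k + 1) - x k)‖ ^ 2)
      ≤ (1 / (K : ℝ)) * ∑ k ∈ range K, (1 / η - θ * μ) / 2 * ‖x k - xstar‖ ^ 2 := by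
  have hKpos : (0 : ℝ) < K := Nat.cast_pos.2 hK
  set q : ℕ → ℝ := fun k => 1 / (2 * η) * ‖xstar - x (k + 1)‖ ^ 2
    + (1 / η - L) / 2 * ‖x (k + 1) - x k‖ ^ 2 + (1 - θ) / (2 * L) *
      ‖ρ • (xs - x (k + 1)) - lam - f' xstar - (1 / η) • (x (k + 1) - x k)‖ ^ 2
  set l : ℕ → ℝ := fun k => (1 / η - θ * μ) / 2 * ‖x k - xstar‖ ^ 2
  have hmean : ∑ k ∈ range K, x (k + 1) = (#(range K) : ℝ) • xbar := by
    rw [card_range, hxbar, smul_smul, mul_one_div_cancel hKpos.ne', one_smul]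
  have hsteps : ∑ k ∈ range K,
      (f (x (k + 1)) - f xstar - ⟪ρ • (xs - x (k + 1)) - lam, x (k + 1) - xstar⟫ + q k)
      ≤ ∑ k ∈ range K, l k :=
    sum_le_sum fun k hk => inner_step_bound hθ0 hθ1
      (grad_eq_of_update (by positivity) (hupdate k (mem_range.1 hk)))
      (hdescent _ _) (hstrong _ _) (hcoco _ _)
  rw [sum_add_distrib, sum_sub_distrib, sum_sub_distrib, sum_const, card_range,
    nsmul_eq_mul] at hsteps
  have hjensen : K * f xbar ≤ ∑ k ∈ range K, f (x (k + 1)) := by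
    simpa only [card_range] using card_mul_le_sum_of_subgradient_s14 (g := f' xbar)
      (fun y => by linarith [hstrong xbar y, mul_nonneg hμ (sq_nonneg ‖xbar - y‖)]) hmean
  have hdual : ∑ k ∈ range K, ⟪ρ • (xs - x (k + 1)) - lam, x (k + 1) - xstar⟫
      ≤ K * ⟪lam', xbar - xstar⟫ := by
    have hp : ∀ k, ρ • (xs - x (k + 1)) - lam = lam' - ρ • (x (k + 1) - xbar) := by
      intro k; rw [hlam']; module
    simpa only [hp, card_range] using sum_inner_sub_smul_sub_mean_le hρ lam' xstar hmean
  have hsum : K * (f xbar - f xstar - ⟪xbar - xstar, lam'⟫) + ∑ k ∈ range K, q k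
      ≤ ∑ k ∈ range K, l k := by
    rw [real_inner_comm]; linarith
  calc _ = 1 / (K : ℝ) *
          (K * (f xbar - f xstar - ⟪xbar - xstar, lam'⟫) + ∑ k ∈ range K, q k) := by
        field_simp
    _ ≤ 1 / (K : ℝ) * ∑ k ∈ range K, l k := by gcongr

end GPDMM

theorem gpdmm_lemma2_intermediate_general {d m K : ℕ} (hK : 1 ≤ K)
    (f : Fin m → EuclideanSpace ℝ (Fin d) → ℝ)
    (f' : Fin m → EuclideanSpace ℝ (Fin d) → EuclideanSpace ℝ (Fin d))
    (L μ : ℝ) (hμ : 0 ≤ μ)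
    (hdescent : ∀ i x y, f i y ≤ f i x + ⟪f' i x, y - x⟫ + L / 2 * ‖x - y‖ ^ 2)
    (hcoco : ∀ i x y, f i y ≥ f i x + ⟪f' i x, y - x⟫ + 1 / (2 * L) * ‖f' i x - f' i y‖ ^ 2)
    (hstrong : ∀ i x y, f i y ≥ f i x + ⟪f' i x, y - x⟫ + μ / 2 * ‖x - y‖ ^ 2)
    (η ρ : ℝ) (hη : 0 < η) (hρ : 0 < ρ)
    -- iterates at outer iteration r
    (xsr : EuclideanSpace ℝ (Fin d))
    (xiR : Fin m → ℕ → EuclideanSpace ℝ (Fin d))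
    (xbarR : Fin m → EuclideanSpace ℝ (Fin d))
    (lamsiR lamisR1 : Fin m → EuclideanSpace ℝ (Fin d))
    (hinnerR : ∀ i, ∀ k < K, xiR i (k + 1) =
      xiR i k - (1 / (1 / η + ρ)) • (f' i (xiR i k) + ρ • (xiR i k - xsr) + lamsiR i))
    (hxbarR : ∀ i, xbarR i = (1 / (K : ℝ)) • ∑ k ∈ Finset.range K, xiR i (k + 1))
    (hlamisR1 : ∀ i, lamisR1 i = ρ • (xsr - xbarR i) - lamsiR i)
    -- reference point and duals
    (xstar : EuclideanSpace ℝ (Fin d)) (lamstar : Fin m → EuclideanSpace ℝ (Fin d))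
    (hlamstar : ∀ i, lamstar i = f' i xstar) :
    ∀ θ ∈ Set.Icc (0 : ℝ) 1,
      ∑ i, (1 / (K : ℝ)) * ∑ k ∈ Finset.range K,
            (1 / η - θ * μ) / 2 * ‖xiR i k - xstar‖ ^ 2
      ≥ ∑ i,
          (f i (xbarR i) - f i xstar - ⟪xbarR i - xstar, lamisR1 i⟫
            + (1 / (K : ℝ)) * ∑ k ∈ Finset.range K,
                (1 / (2 * η) * ‖xstar - xiR i (k + 1)‖ ^ 2
                  + (1 / η - L) / 2 * ‖xiR i (k + 1) - xiR i k‖ ^ 2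
                  + (1 - θ) / (2 * L) *
                      ‖ρ • (xsr - xiR i (k + 1)) - lamsiR i - lamstar i
                        - (1 / η) • (xiR i (k + 1) - xiR i k)‖ ^ 2)) := by
  rintro θ ⟨hθ0, hθ1⟩
  refine sum_le_sum fun i _ => ?_
  rw [hlamstar i]
  exact GPDMM.inner_steps_average_bound hK hμ hη hρ.le hθ0 hθ1 (hdescent i) (hcoco i) (hstrong i)
    (hinnerR i) (hxbarR i) (hlamisR1 i)

/-- The intermediate inequality (equation (45), step (b)) in the proof of Lemma 2 of
the paper, obtained by summing the one-step inequality of Lemma 1 over the K inner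
steps and all m clients and applying Jensen's inequality. -/
theorem gpdmm_lemma2_intermediate {d m K : ℕ} (hm : 0 < m) (hK : 1 ≤ K)
    (f : Fin m → EuclideanSpace ℝ (Fin d) → ℝ)
    (f' : Fin m → EuclideanSpace ℝ (Fin d) → EuclideanSpace ℝ (Fin d))
    (L μ : ℝ) (hL : 0 < L) (hμ : 0 ≤ μ) (hμL : μ ≤ L)
    (hdiff : ∀ i x, HasGradientAt (f i) (f' i x) x)
    (hdescent : ∀ i x y, f i y ≤ f i x + ⟪f' i x, y - x⟫ + L / 2 * ‖x - y‖ ^ 2)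
    (hcoco : ∀ i x y, f i y ≥ f i x + ⟪f' i x, y - x⟫ + 1 / (2 * L) * ‖f' i x - f' i y‖ ^ 2)
    (hstrong : ∀ i x y, f i y ≥ f i x + ⟪f' i x, y - x⟫ + μ / 2 * ‖x - y‖ ^ 2)
    (η ρ : ℝ) (hη : 0 < η) (hηL : 1 / η ≥ L) (hρ : 0 < ρ)
    -- iterates at outer iteration r
    (xsr : EuclideanSpace ℝ (Fin d))
    (xiR : Fin m → ℕ → EuclideanSpace ℝ (Fin d))
    (xbarR : Fin m → EuclideanSpace ℝ (Fin d))
    (lamsiR lamisR1 : Fin m → EuclideanSpace ℝ (Fin d))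
    (hinnerR : ∀ i, ∀ k < K, xiR i (k + 1) =
      xiR i k - (1 / (1 / η + ρ)) • (f' i (xiR i k) + ρ • (xiR i k - xsr) + lamsiR i))
    (hxbarR : ∀ i, xbarR i = (1 / (K : ℝ)) • ∑ k ∈ Finset.range K, xiR i (k + 1))
    (hlamisR1 : ∀ i, lamisR1 i = ρ • (xsr - xbarR i) - lamsiR i)
    -- reference point and duals
    (xstar : EuclideanSpace ℝ (Fin d)) (lamstar : Fin m → EuclideanSpace ℝ (Fin d))
    (hlamstar : ∀ i, lamstar i = f' i xstar) :
    ∀ θ ∈ Set.Icc (0 : ℝ) 1,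
      ∑ i, (1 / (K : ℝ)) * ∑ k ∈ Finset.range K,
            (1 / η - θ * μ) / 2 * ‖xiR i k - xstar‖ ^ 2
      ≥ ∑ i,
          (f i (xbarR i) - f i xstar - ⟪xbarR i - xstar, lamisR1 i⟫
            + (1 / (K : ℝ)) * ∑ k ∈ Finset.range K,
                (1 / (2 * η) * ‖xstar - xiR i (k + 1)‖ ^ 2
                  + (1 / η - L) / 2 * ‖xiR i (k + 1) - xiR i k‖ ^ 2
                  + (1 - θ) / (2 * L) *
                      ‖ρ • (xsr - xiR i (k + 1)) - lamsiR i - lamstar i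
                        - (1 / η) • (xiR i (k + 1) - xiR i k)‖ ^ 2)) :=
  gpdmm_lemma2_intermediate_general hK f f' L μ hμ hdescent hcoco hstrong η ρ hη hρ xsr xiR xbarR
    lamsiR lamisR1 hinnerR hxbarR hlamisR1 xstar lamstar hlamstar
end
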